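/- arXiv:2209.13034 — 2 statements merged into one kernel-verified Lean document; each statement's English description precedes it below -/
import Mathlib

section
/- Let G=(V,E) be a hypergraph, let z be a point of the multilinear set S_G, let e_0 ∈ E, and let T be a nonempty finite index set of distinct edges e_k ∈ E \ {e_0} (k ∈ T), each adjacent to e_0 (i.e., e_k ∩ e_0 ≠ ∅), satisfying γ_i := |(e_0 ∩ e_i) \ ∪_{j∈T\{i}} (e_0 ∩ e_j)| ≥ 2 for all i ∈ T. Then z satisfies the extended flower inequality centered at e_0 with neighbors e_k, k ∈ T: ∑_{v ∈ e_0 \ ∪_{k∈T} e_k} z_v + ∑_{k∈T} z_{e_k} − z_{e_0} ≤ |e_0 \ ∪_{k∈T} e_k| + |T| − 1. -/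
open Finset

/-- A hypergraph: a finite set of nodes together with a set of edges,
each a subset of the nodes of cardinality at least two. -/
structure MLHypergraph (α : Type*) [DecidableEq α] where
  V : Finset α
  E : Finset (Finset α)
  edge_sub : ∀ e ∈ E, e ⊆ V
  edge_card : ∀ e ∈ E, 2 ≤ e.card

section Defs

variable {α : Type*} [DecidableEq α]

/-- Membership in the multilinear set `S_G`; a point is encoded as a single function
`z : Finset α → ℝ`, with node variables `z {v}` and edge variables `z e`. -/
def MultilinearSet (G : MLHypergraph α) (z : Finset α → ℝ) : Prop :=
  (∀ v ∈ G.V, z {v} = 0 ∨ z {v} = 1) ∧ ∀ e ∈ G.E, z e = ∏ v ∈ e, z {v}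

/-- Membership in the standard linearization `MP^LP_G`. -/
def StdLin (G : MLHypergraph α) (z : Finset α → ℝ) : Prop :=
  (∀ v ∈ G.V, z {v} ≤ 1) ∧
    ∀ e ∈ G.E, 0 ≤ z e ∧ (∑ v ∈ e, z {v}) - (e.card : ℝ) + 1 ≤ z e ∧ ∀ v ∈ e, z e ≤ z {v}

/-- The (extended) flower inequality centered at `e₀` with set of neighbors `T`. -/
def ExtFlowerIneq (z : Finset α → ℝ) (e₀ : Finset α) (T : Finset (Finset α)) : Prop :=
  (∑ v ∈ e₀ \ T.biUnion id, z {v}) + (∑ e ∈ T, z e) - z e₀ ≤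
    ((e₀ \ T.biUnion id).card : ℝ) + (T.card : ℝ) - 1

/-- `T` is a valid set of neighbors for an extended flower inequality centered at `e₀`:
a nonempty set of edges, distinct from `e₀`, adjacent to `e₀`, with `γ_i ≥ 2` for all `i ∈ T`. -/
def ValidEFNeighbors (G : MLHypergraph α) (e₀ : Finset α) (T : Finset (Finset α)) : Prop :=
  T.Nonempty ∧ (∀ e ∈ T, e ∈ G.E ∧ e ≠ e₀ ∧ (e ∩ e₀).Nonempty) ∧
    ∀ i ∈ T, 2 ≤ ((e₀ ∩ i) \ (T.erase i).biUnion (fun j => e₀ ∩ j)).card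

/-- Membership in the extended flower relaxation `MP^EF_G`. -/
def MPEF (G : MLHypergraph α) (z : Finset α → ℝ) : Prop :=
  StdLin G z ∧ ∀ e₀ ∈ G.E, ∀ T : Finset (Finset α), ValidEFNeighbors G e₀ T → ExtFlowerIneq z e₀ T

/-- `T` is a valid set of neighbors for a flower inequality centered at `e₀`. -/
def ValidFlowerNeighbors (G : MLHypergraph α) (e₀ : Finset α) (T : Finset (Finset α)) : Prop :=
  T.Nonempty ∧ (∀ e ∈ T, e ∈ G.E ∧ e ≠ e₀ ∧ 2 ≤ (e₀ ∩ e).card) ∧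
    ∀ i ∈ T, ∀ j ∈ T, i ≠ j → e₀ ∩ i ∩ j = ∅

/-- Membership in the flower relaxation `MP^F_G`. -/
def MPF (G : MLHypergraph α) (z : Finset α → ℝ) : Prop :=
  StdLin G z ∧ ∀ e₀ ∈ G.E, ∀ T : Finset (Finset α), ValidFlowerNeighbors G e₀ T → ExtFlowerIneq z e₀ T

/-- A recursive McCormick relaxation (RMC) of the multilinear set `S_G`:
a set `Ebar` of artificial edges together with, for each `f ∈ E ∪ Ebar`,
a partition `f = J f ∪ K f` into two disjoint nonempty parts, each a singleton
or an element of `E ∪ Ebar`, such that every artificial edge is reachable from some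
edge of `E` by iteratively passing to non-singleton parts. -/
structure RMC {α : Type*} [DecidableEq α] (G : MLHypergraph α) where
  Ebar : Finset (Finset α)
  ebar_sub : ∀ f ∈ Ebar, f ⊆ G.V
  ebar_card : ∀ f ∈ Ebar, 2 ≤ f.card
  ebar_new : ∀ f ∈ Ebar, f ∉ G.E
  J : Finset α → Finset α
  K : Finset α → Finset α
  union_eq : ∀ f ∈ G.E ∪ Ebar, J f ∪ K f = f
  disj : ∀ f ∈ G.E ∪ Ebar, Disjoint (J f) (K f)
  J_ne : ∀ f ∈ G.E ∪ Ebar, (J f).Nonempty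
  K_ne : ∀ f ∈ G.E ∪ Ebar, (K f).Nonempty
  J_mem : ∀ f ∈ G.E ∪ Ebar, (J f).card = 1 ∨ J f ∈ G.E ∪ Ebar
  K_mem : ∀ f ∈ G.E ∪ Ebar, (K f).card = 1 ∨ K f ∈ G.E ∪ Ebar
  reach : ∀ f ∈ Ebar, ∃ e ∈ G.E, Relation.ReflTransGen
    (fun a b => a ∈ G.E ∪ Ebar ∧ 2 ≤ b.card ∧ (b = J a ∨ b = K a)) e f

/-- One step of the recursive decomposition: passing from `a` to a non-singleton part of it. -/
def RMC.step {α : Type*} [DecidableEq α] {G : MLHypergraph α} (M : RMC G) (a b : Finset α) : Prop :=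
  a ∈ G.E ∪ M.Ebar ∧ 2 ≤ b.card ∧ (b = M.J a ∨ b = M.K a)

/-- The recursive sequence `R_e` of `e`: all sets obtained from `e` by iteratively
passing to non-singleton parts of the partitions (with `e ∈ R_e`). -/
def RMC.Rseq {α : Type*} [DecidableEq α] {G : MLHypergraph α} (M : RMC G) (e : Finset α) :
    Set (Finset α) :=
  {f | Relation.ReflTransGen M.step e f}

/-- The RMC is non-overlapping if the recursive sequences of distinct edges are disjoint. -/
def RMC.NonOverlapping {α : Type*} [DecidableEq α] {G : MLHypergraph α} (M : RMC G) : Prop :=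
  ∀ e ∈ G.E, ∀ e' ∈ G.E, e ≠ e' → M.Rseq e ∩ M.Rseq e' = ∅

/-- The point `w` (including artificial coordinates) satisfies all McCormick
inequalities of the RMC. -/
def RMC.McCormick {α : Type*} [DecidableEq α] {G : MLHypergraph α} (M : RMC G)
    (w : Finset α → ℝ) : Prop :=
  ∀ f ∈ G.E ∪ M.Ebar,
    0 ≤ w f ∧ w (M.J f) + w (M.K f) - 1 ≤ w f ∧ w f ≤ w (M.J f) ∧ w f ≤ w (M.K f)

/-- Membership in `MP^RMC_G`, the projection of the RMC polytope onto the coordinates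
indexed by `V ∪ E`: the point `z` admits an extension to the artificial variables
satisfying all McCormick inequalities of the RMC. -/
def RMC.MPRMC {α : Type*} [DecidableEq α] {G : MLHypergraph α} (M : RMC G)
    (z : Finset α → ℝ) : Prop :=
  ∃ w : Finset α → ℝ, (∀ v ∈ G.V, w {v} = z {v}) ∧ (∀ e ∈ G.E, w e = z e) ∧ M.McCormick w

/-- A flower partition `Te` of the edge `e`: a partition of `e` into pairwise disjoint
nonempty parts, each a singleton subset of `e` or an element of `R_e`, such that every
part lying in `Ebar` belongs to the recursive sequence of some other original edge. -/
def RMC.FlowerPartition {α : Type*} [DecidableEq α] {G : MLHypergraph α} (M : RMC G)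
    (e : Finset α) (Te : Finset (Finset α)) : Prop :=
  (∀ p ∈ Te, p.Nonempty) ∧
  (∀ p ∈ Te, ∀ q ∈ Te, p ≠ q → Disjoint p q) ∧
  Te.biUnion id = e ∧
  (∀ p ∈ Te, (p.card = 1 ∧ p ⊆ e) ∨ p ∈ M.Rseq e) ∧
  ∀ p ∈ Te, p ∈ M.Ebar → ∃ e' ∈ G.E, e' ≠ e ∧ p ∈ M.Rseq e'

/-- The McCormick system for the bilinear equation `w = u * v` over the unit hypercube. -/
def McSys (u v w : ℝ) : Prop := 0 ≤ w ∧ u + v - 1 ≤ w ∧ w ≤ u ∧ w ≤ v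

end Defs

/-!
Points of `S_G` are `0/1`-valued, so each sum on the left is at most its number of terms and
what has to be found is the `-1`. If `z_{e₀} = 1` it is `z_{e₀}` itself. Otherwise some
`v ∈ e₀` has `z_v = 0`, which kills either a node term (if `v` lies in no `e_k`) or the term
`z_{e_k}` of an edge containing `v`.
-/

theorem Finset.sum_le_card_sub_one_of_eq_zero {ι : Type*} [DecidableEq ι] {s : Finset ι}
    {f : ι → ℝ} (hf : ∀ i ∈ s, f i ≤ 1) {a : ι} (ha : a ∈ s) (hfa : f a = 0) :
    ∑ i ∈ s, f i ≤ #s - 1 := by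
  rw [← add_sum_erase s f ha, hfa, zero_add, ← cast_card_erase_of_mem ha]
  simpa using sum_le_card_nsmul _ f 1 fun i hi => hf i (mem_of_mem_erase hi)

theorem Finset.sum_le_card_of_le_one {ι : Type*} {s : Finset ι} {f : ι → ℝ}
    (hf : ∀ i ∈ s, f i ≤ 1) : ∑ i ∈ s, f i ≤ #s := by
  simpa using sum_le_card_nsmul s f 1 hf

namespace MultilinearSet

variable {α : Type*} [DecidableEq α] {G : MLHypergraph α} {z : Finset α → ℝ}

theorem node_nonneg (hz : MultilinearSet G z) {v : α} (hv : v ∈ G.V) : 0 ≤ z {v} := by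
  rcases hz.1 v hv with h | h <;> simp [h]

theorem node_le_one (hz : MultilinearSet G z) {v : α} (hv : v ∈ G.V) : z {v} ≤ 1 := by
  rcases hz.1 v hv with h | h <;> simp [h]

theorem edge_le_one (hz : MultilinearSet G z) {e : Finset α} (he : e ∈ G.E) : z e ≤ 1 := by
  rw [hz.2 e he]
  exact prod_le_one (fun v hv => hz.node_nonneg (G.edge_sub e he hv))
    fun v hv => hz.node_le_one (G.edge_sub e he hv)

theorem edge_eq_zero_of_node_eq_zero (hz : MultilinearSet G z) {e : Finset α} (he : e ∈ G.E)
    {v : α} (hv : v ∈ e) (hv₀ : z {v} = 0) : z e = 0 := by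
  rw [hz.2 e he]
  exact prod_eq_zero hv hv₀

theorem edge_eq_one_of_forall_node_ne_zero (hz : MultilinearSet G z) {e : Finset α}
    (he : e ∈ G.E) (h : ∀ v ∈ e, z {v} ≠ 0) : z e = 1 := by
  rw [hz.2 e he]
  exact prod_eq_one fun v hv => (hz.1 v (G.edge_sub e he hv)).resolve_left (h v hv)

end MultilinearSet

theorem multilinear_set_satisfies_extended_flower_general {α : Type*} [DecidableEq α]
    (G : MLHypergraph α) (z : Finset α → ℝ) (hz : MultilinearSet G z)
    (e₀ : Finset α) (he₀ : e₀ ∈ G.E)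
    (T : Finset (Finset α))
    (hTE : ∀ e ∈ T, e ∈ G.E ∧ e ≠ e₀) :
    ExtFlowerIneq z e₀ T := by
  set S := e₀ \ T.biUnion id
  have hS : ∀ v ∈ S, z {v} ≤ 1 := fun v hv =>
    hz.node_le_one (G.edge_sub e₀ he₀ (mem_sdiff.mp hv).1)
  have hT : ∀ e ∈ T, z e ≤ 1 := fun e he => hz.edge_le_one (hTE e he).1
  unfold ExtFlowerIneq
  by_cases hzero : ∃ v ∈ e₀, z {v} = 0
  · obtain ⟨v, hv, hv₀⟩ := hzero
    rw [hz.edge_eq_zero_of_node_eq_zero he₀ hv hv₀]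
    by_cases hvT : v ∈ T.biUnion id
    · obtain ⟨e, he, hve⟩ := mem_biUnion.mp hvT
      have hzT := sum_le_card_sub_one_of_eq_zero hT he
        (hz.edge_eq_zero_of_node_eq_zero (hTE e he).1 hve hv₀)
      linarith [sum_le_card_of_le_one hS]
    · have hzS := sum_le_card_sub_one_of_eq_zero hS (mem_sdiff.mpr ⟨hv, hvT⟩) hv₀
      linarith [sum_le_card_of_le_one hT]
  · push Not at hzero
    rw [hz.edge_eq_one_of_forall_node_ne_zero he₀ hzero]
    linarith [sum_le_card_of_le_one hS, sum_le_card_of_le_one hT]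

/-- every point of the multilinear set satisfies every extended flower
inequality. -/
theorem multilinear_set_satisfies_extended_flower {α : Type*} [DecidableEq α]
    (G : MLHypergraph α) (z : Finset α → ℝ) (hz : MultilinearSet G z)
    (e₀ : Finset α) (he₀ : e₀ ∈ G.E)
    (T : Finset (Finset α)) (hT : T.Nonempty)
    (hTE : ∀ e ∈ T, e ∈ G.E ∧ e ≠ e₀)
    (hadj : ∀ e ∈ T, (e ∩ e₀).Nonempty)
    (hγ : ∀ i ∈ T, 2 ≤ ((e₀ ∩ i) \ (T.erase i).biUnion (fun j => e₀ ∩ j)).card) :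
    ExtFlowerIneq z e₀ T :=
  multilinear_set_satisfies_extended_flower_general G z hz e₀ he₀ T hTE
end

section
/- Let G=(V,E) be a hypergraph and consider a non-overlapping recursive McCormick relaxation of the multilinear set S_G. Then MP^LP_G ⊆ MP^RMC_G; that is, every point of the standard linearization admits an extension to the artificial variables satisfying all McCormick inequalities of the RMC. -/
open Finset

/-! Each `f ∈ E ∪ Ē` lies in the recursive sequence `R_e` of exactly one `e ∈ E`, and we set
`w_f = max (z_e, ℓ f)` with `ℓ S = ∑_{v ∈ S} z_v - |S| + 1`. Since `ℓ` is additive along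
partitions up to the constant `1`, and `max (z_e, ℓ S)` equals `z_v` on a singleton `{v} ⊆ e`
(as `z_e ≤ z_v`) and `z_e` at `S = e` (as `ℓ e ≤ z_e`), each McCormick system of the RMC becomes
that of `max (a, b)`, `max (a, c)`, `max (a, b + c - 1)` with `0 ≤ a ≤ 1` and `b, c ≤ 1`. -/

section LinLowerBound

variable {α : Type*}

def linLowerBound (z : Finset α → ℝ) (S : Finset α) : ℝ := (∑ v ∈ S, z {v}) - (S.card : ℝ) + 1

theorem linLowerBound_singleton (z : Finset α → ℝ) (v : α) : linLowerBound z {v} = z {v} := by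
  simp [linLowerBound]

theorem linLowerBound_le_one {z : Finset α → ℝ} {S : Finset α} (h : ∀ v ∈ S, z {v} ≤ 1) :
    linLowerBound z S ≤ 1 := by
  have hsum : ∑ v ∈ S, z {v} ≤ S.card := by
    simpa using Finset.sum_le_sum h
  unfold linLowerBound
  linarith

theorem linLowerBound_union [DecidableEq α] (z : Finset α → ℝ) {A B : Finset α}
    (h : Disjoint A B) : linLowerBound z (A ∪ B) = linLowerBound z A + linLowerBound z B - 1 := by
  simp only [linLowerBound, Finset.sum_union h, Finset.card_union_of_disjoint h]
  push_cast
  ring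

end LinLowerBound

theorem mcSys_max {a b c : ℝ} (ha₀ : 0 ≤ a) (ha₁ : a ≤ 1) (hb : b ≤ 1) (hc : c ≤ 1) :
    McSys (max a b) (max a c) (max a (b + c - 1)) := by
  refine ⟨ha₀.trans (le_max_left _ _), ?_,
    max_le (le_max_left _ _) ((by linarith : b + c - 1 ≤ b).trans (le_max_right _ _)),
    max_le (le_max_left _ _) ((by linarith : b + c - 1 ≤ c).trans (le_max_right _ _))⟩
  rcases le_total b a with hba | hab <;> rcases le_total c a with hca | hac
  · rw [max_eq_left hba, max_eq_left hca]; linarith [le_max_left a (b + c - 1)]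
  · rw [max_eq_left hba, max_eq_right hac]; linarith [le_max_left a (b + c - 1)]
  · rw [max_eq_right hab, max_eq_left hca]; linarith [le_max_left a (b + c - 1)]
  · rw [max_eq_right hab, max_eq_right hac]; exact le_max_right _ _

namespace StdLin

variable {α : Type*} [DecidableEq α] {G : MLHypergraph α} {z : Finset α → ℝ}

theorem le_one_of_mem_E (hz : StdLin G z) {e : Finset α} (he : e ∈ G.E) : z e ≤ 1 := by
  obtain ⟨v, hv⟩ := Finset.card_pos.mp (zero_lt_two.trans_le (G.edge_card e he))
  exact ((hz.2 e he).2.2 v hv).trans (hz.1 v (G.edge_sub e he hv))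

end StdLin

namespace RMC

variable {α : Type*} [DecidableEq α] {G : MLHypergraph α} (M : RMC G)

theorem J_subset {f : Finset α} (hf : f ∈ G.E ∪ M.Ebar) : M.J f ⊆ f :=
  Finset.subset_union_left.trans (M.union_eq f hf).subset

theorem K_subset {f : Finset α} (hf : f ∈ G.E ∪ M.Ebar) : M.K f ⊆ f :=
  Finset.subset_union_right.trans (M.union_eq f hf).subset

theorem subset_of_step {a b : Finset α} (h : M.step a b) : b ⊆ a := by
  obtain ⟨ha, -, rfl | rfl⟩ := h
  exacts [M.J_subset ha, M.K_subset ha]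

theorem subset_of_mem_Rseq {e f : Finset α} (h : f ∈ M.Rseq e) : f ⊆ e := by
  induction h with
  | refl => exact subset_rfl
  | tail _ hstep ih => exact (M.subset_of_step hstep).trans ih

theorem two_le_card_of_mem_Rseq {e f : Finset α} (he : e ∈ G.E) (h : f ∈ M.Rseq e) :
    2 ≤ f.card := by
  cases h with
  | refl => exact G.edge_card e he
  | tail _ hstep => exact hstep.2.1

theorem exists_mem_Rseq {f : Finset α} (hf : f ∈ G.E ∪ M.Ebar) : ∃ e ∈ G.E, f ∈ M.Rseq e := by
  rcases Finset.mem_union.mp hf with hE | hEbar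
  · exact ⟨f, hE, Relation.ReflTransGen.refl⟩
  · exact M.reach f hEbar

variable {M}

theorem NonOverlapping.eq_of_mem_Rseq (hM : M.NonOverlapping) {e e' f : Finset α}
    (he : e ∈ G.E) (he' : e' ∈ G.E) (hf : f ∈ M.Rseq e) (hf' : f ∈ M.Rseq e') : e = e' := by
  by_contra hne
  exact (Set.eq_empty_iff_forall_notMem.mp (hM e he e' he' hne)) f ⟨hf, hf'⟩

variable (M)

open Classical in
noncomputable def extension (z : Finset α → ℝ) (S : Finset α) : ℝ :=
  if h : ∃ e ∈ G.E, S ∈ M.Rseq e then max (z h.choose) (linLowerBound z S) else z S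

variable {M}

theorem extension_of_mem_Rseq (hM : M.NonOverlapping) (z : Finset α → ℝ) {e S : Finset α}
    (he : e ∈ G.E) (hS : S ∈ M.Rseq e) : M.extension z S = max (z e) (linLowerBound z S) := by
  have h : ∃ e ∈ G.E, S ∈ M.Rseq e := ⟨e, he, hS⟩
  rw [extension, dif_pos h, hM.eq_of_mem_Rseq h.choose_spec.1 he h.choose_spec.2 hS]

theorem extension_singleton (z : Finset α → ℝ) (v : α) : M.extension z {v} = z {v} := by
  refine dif_neg fun ⟨e, he, hv⟩ => ?_
  simpa using M.two_le_card_of_mem_Rseq he hv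

theorem extension_of_mem_E (hM : M.NonOverlapping) {z : Finset α → ℝ} (hz : StdLin G z)
    {e : Finset α} (he : e ∈ G.E) : M.extension z e = z e := by
  rw [extension_of_mem_Rseq hM z he Relation.ReflTransGen.refl]
  exact max_eq_left (hz.2 e he).2.1

theorem extension_of_part (hM : M.NonOverlapping) {z : Finset α → ℝ} (hz : StdLin G z)
    {e f g : Finset α} (he : e ∈ G.E) (hfe : f ∈ M.Rseq e) (hf : f ∈ G.E ∪ M.Ebar)
    (hg : g = M.J f ∨ g = M.K f) : M.extension z g = max (z e) (linLowerBound z g) := by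
  by_cases hcard : 2 ≤ g.card
  · exact extension_of_mem_Rseq hM z he (hfe.tail ⟨hf, hcard, hg⟩)
  have hgf : g ⊆ f := by
    rcases hg with rfl | rfl
    exacts [M.J_subset hf, M.K_subset hf]
  have hne : g.Nonempty := by
    rcases hg with rfl | rfl
    exacts [M.J_ne f hf, M.K_ne f hf]
  have hcard_one : g.card = 1 := by have := hne.card_pos; omega
  obtain ⟨v, rfl⟩ := Finset.card_eq_one.mp hcard_one
  have hve : v ∈ e := M.subset_of_mem_Rseq hfe (hgf (Finset.mem_singleton_self v))
  rw [extension_singleton, linLowerBound_singleton, max_eq_right ((hz.2 e he).2.2 v hve)]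

theorem mcCormick_extension (hM : M.NonOverlapping) {z : Finset α → ℝ} (hz : StdLin G z) :
    M.McCormick (M.extension z) := by
  intro f hf
  obtain ⟨e, he, hfe⟩ := M.exists_mem_Rseq hf
  have hle_one : ∀ {S}, S ⊆ f → linLowerBound z S ≤ 1 := fun hS => linLowerBound_le_one
    fun v hv => hz.1 v (G.edge_sub e he (M.subset_of_mem_Rseq hfe (hS hv)))
  have hsplit := linLowerBound_union z (M.disj f hf)
  rw [M.union_eq f hf] at hsplit
  rw [extension_of_mem_Rseq hM z he hfe, extension_of_part hM hz he hfe hf (Or.inl rfl),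
    extension_of_part hM hz he hfe hf (Or.inr rfl), hsplit]
  exact mcSys_max (hz.2 e he).1 (hz.le_one_of_mem_E he) (hle_one (M.J_subset hf))
    (hle_one (M.K_subset hf))

end RMC

/-- for a non-overlapping recursive McCormick relaxation,
`MP^LP_G ⊆ MP^RMC_G`. -/
theorem MPLP_subset_MPRMC_of_nonOverlapping {α : Type*} [DecidableEq α]
    (G : MLHypergraph α) (M : RMC G) (hM : M.NonOverlapping)
    (z : Finset α → ℝ) (hz : StdLin G z) :
    M.MPRMC z :=
  ⟨M.extension z, fun v _ => RMC.extension_singleton z v,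
    fun _ he => RMC.extension_of_mem_E hM hz he, RMC.mcCormick_extension hM hz⟩
end
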